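/- arXiv:2101.11041 — 3 statements merged into one kernel-verified Lean document; each statement's English description precedes it below -/
import Mathlib

section
/- If f: E → ℝ is convex, differentiable, and (L, κ)-weakly smooth w.r.t. ‖·‖ with κ ∈ (1,2], and x* is a global minimizer of f, then for all x: f(x) − f(x*) ≥ ((κ−1)/(L^{1/(κ−1)} κ)) ‖∇f(x)‖_*^{κ/(κ−1)}. -/
/-!
Weak smoothness gives the descent inequality `f (x + u) ≤ f x + f'(x) u + (L / κ) ‖u‖ ^ κ`.
Taking `u = -t v` with `v` a unit vector on which `f'(x)` attains its dual norm `c`, the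
minimum value satisfies `f x* ≤ f x - (t c - (L / κ) t ^ κ)` for every `t ≥ 0`, and the best
`t` turns the bracket into the stated multiple of `c ^ (κ / (κ - 1))`.
-/

open Metric

theorem ContinuousLinearMap.exists_norm_le_one_apply_eq_opNorm {E : Type*}
    [NormedAddCommGroup E] [NormedSpace ℝ E] [FiniteDimensional ℝ E] (a : E →L[ℝ] ℝ) :
    ∃ v, ‖v‖ ≤ 1 ∧ a v = ‖a‖ := by
  obtain ⟨v, hv, hmax⟩ := (isCompact_closedBall (0 : E) 1).exists_isMaxOn
    (nonempty_closedBall.2 zero_le_one) a.continuous.continuousOn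
  have hle : ∀ u ∈ closedBall (0 : E) 1, ‖a u‖ ≤ a v := fun u hu =>
    abs_le.2 ⟨neg_le.1 (by simpa using hmax (show -u ∈ closedBall (0 : E) 1 by simpa using hu)),
      hmax hu⟩
  refine ⟨v, mem_closedBall_zero_iff.1 hv, le_antisymm ?_ ?_⟩
  · exact (le_abs_self _).trans (a.unit_le_opNorm v (mem_closedBall_zero_iff.1 hv))
  · rw [← a.sSup_unitClosedBall_eq_norm]
    exact csSup_le ((nonempty_closedBall.2 zero_le_one).image _)
      (by rintro _ ⟨u, hu, rfl⟩; exact hle u hu)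

/-- `t = (c / L) ^ (1 / (κ - 1))` maximizes `t ↦ t c - (L / κ) t ^ κ`, so the right-hand side is
the Legendre transform of `(L / κ) t ^ κ` at `c`. -/
theorem div_rpow_mul_sub_rpow_eq {c L κ : ℝ} (hc : 0 ≤ c) (hL : 0 < L) (hκ : 1 < κ) :
    (c / L) ^ (1 / (κ - 1)) * c - L / κ * ((c / L) ^ (1 / (κ - 1))) ^ κ =
      (κ - 1) / (L ^ (1 / (κ - 1)) * κ) * c ^ (κ / (κ - 1)) := by
  have hκ1 : κ - 1 ≠ 0 := by linarith
  have hsum : 1 / (κ - 1) + 1 = κ / (κ - 1) := by field_simp; ring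
  have hsum_ne : 1 / (κ - 1) + 1 ≠ 0 := by
    rw [hsum]; exact div_ne_zero (by linarith) hκ1
  have hlinear : (c / L) ^ (1 / (κ - 1)) * c = c ^ (κ / (κ - 1)) / L ^ (1 / (κ - 1)) := by
    rw [Real.div_rpow hc hL.le, div_mul_eq_mul_div, ← hsum, Real.rpow_add' hc hsum_ne,
      Real.rpow_one]
  have hpower : ((c / L) ^ (1 / (κ - 1))) ^ κ =
      c ^ (κ / (κ - 1)) / (L ^ (1 / (κ - 1)) * L) := by
    rw [← Real.rpow_mul (div_nonneg hc hL.le), one_div_mul_eq_div, Real.div_rpow hc hL.le,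
      ← hsum, Real.rpow_add hL, Real.rpow_one]
  have hLpow : 0 < L ^ (1 / (κ - 1)) := Real.rpow_pos_of_pos hL _
  rw [hlinear, hpower]
  field_simp

def WeaklySmoothWith {E : Type*} [NormedAddCommGroup E] [NormedSpace ℝ E]
    (L κ : ℝ) (f : E → ℝ) : Prop :=
  ∀ x y, ‖fderiv ℝ f x - fderiv ℝ f y‖ ≤ L * ‖x - y‖ ^ (κ - 1)

/-- Along `t ↦ x + t • u` the slope gap `(f'(x + t u) - f'(x)) u` is at most
`L ‖u‖ ^ κ t ^ (κ - 1)`, the derivative of the `t ^ κ` correction, so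
`g` is monotone on `[0, 1]`. -/
theorem WeaklySmoothWith.le_add_fderiv_add {E : Type*} [NormedAddCommGroup E]
    [NormedSpace ℝ E] {f : E → ℝ} {L κ : ℝ} (hf : WeaklySmoothWith L κ f)
    (hdiff : Differentiable ℝ f) (hκ : 1 ≤ κ) (x u : E) :
    f (x + u) ≤ f x + fderiv ℝ f x u + L / κ * ‖u‖ ^ κ := by
  have hκ0 : κ ≠ 0 := by linarith
  set g : ℝ → ℝ := fun t => L / κ * ‖u‖ ^ κ * t ^ κ + t * fderiv ℝ f x u - f (x + t • u)
  have hg : ∀ t, HasDerivAt g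
      (L * ‖u‖ ^ κ * t ^ (κ - 1) + fderiv ℝ f x u - fderiv ℝ f (x + t • u) u) t := by
    intro t
    have hline : HasDerivAt (fun t : ℝ => x + t • u) u t := by
      simpa using ((hasDerivAt_id t).smul_const u).const_add x
    have := (((Real.hasDerivAt_rpow_const (Or.inr hκ)).const_mul (L / κ * ‖u‖ ^ κ)).add
      (hasDerivAt_mul_const (fderiv ℝ f x u))).sub
      ((hdiff _).hasFDerivAt.comp_hasDerivAt t hline)
    refine this.congr_deriv ?_
    field_simp
  have hg_nonneg : ∀ t ∈ Set.Ioo (0 : ℝ) 1, 0 ≤ deriv g t := by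
    rintro t ⟨ht, -⟩
    rw [(hg t).deriv]
    have hslope : (fderiv ℝ f (x + t • u) - fderiv ℝ f x) u ≤ L * ‖u‖ ^ κ * t ^ (κ - 1) :=
      calc (fderiv ℝ f (x + t • u) - fderiv ℝ f x) u
          ≤ ‖fderiv ℝ f (x + t • u) - fderiv ℝ f x‖ * ‖u‖ :=
            (Real.le_norm_self _).trans (ContinuousLinearMap.le_opNorm _ _)
        _ ≤ L * ‖t • u‖ ^ (κ - 1) * ‖u‖ := by
          gcongr
          simpa using hf (x + t • u) x
        _ = L * ‖u‖ ^ κ * t ^ (κ - 1) := by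
          rw [norm_smul, Real.norm_of_nonneg ht.le, Real.mul_rpow ht.le (norm_nonneg u)]
          nth_rw 3 [← sub_add_cancel κ 1]
          rw [Real.rpow_add' (norm_nonneg u) (by simpa using hκ0), Real.rpow_one]
          ring
    rw [sub_apply] at hslope
    linarith
  have hmono := monotoneOn_of_deriv_nonneg (convex_Icc 0 1)
    (fun t _ => (hg t).continuousAt.continuousWithinAt)
    (fun t _ => (hg t).differentiableAt.differentiableWithinAt)
    (by simpa only [interior_Icc] using hg_nonneg)
    (Set.left_mem_Icc.2 zero_le_one) (Set.right_mem_Icc.2 zero_le_one) zero_le_one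
  simp only [g, Real.zero_rpow hκ0, Real.one_rpow, zero_smul, one_smul, add_zero, zero_mul,
    mul_zero, mul_one, one_mul] at hmono
  linarith

theorem stmt4_general {E : Type*} [NormedAddCommGroup E] [NormedSpace ℝ E] [FiniteDimensional ℝ E]
    (f : E → ℝ) (L κ : ℝ) (hL : 0 < L) (hκ1 : 1 < κ)
    (hdiff : Differentiable ℝ f)
    (hsmooth : ∀ x y : E, ‖fderiv ℝ f x - fderiv ℝ f y‖ ≤ L * ‖x - y‖ ^ (κ - 1))
    (xstar : E) (hmin : ∀ y : E, f xstar ≤ f y) :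
    ∀ x : E,
      ((κ - 1) / (L ^ (1 / (κ - 1)) * κ)) * ‖fderiv ℝ f x‖ ^ (κ / (κ - 1)) ≤
        f x - f xstar := by
  intro x
  obtain ⟨v, hv, hvx⟩ := (fderiv ℝ f x).exists_norm_le_one_apply_eq_opNorm
  set t := (‖fderiv ℝ f x‖ / L) ^ (1 / (κ - 1))
  have ht : 0 ≤ t := by positivity
  have hdescent := WeaklySmoothWith.le_add_fderiv_add hsmooth hdiff hκ1.le x (-(t • v))
  rw [map_neg, map_smul, hvx, smul_eq_mul] at hdescent
  have hstep : L / κ * ‖-(t • v)‖ ^ κ ≤ L / κ * t ^ κ := by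
    gcongr
    rw [norm_neg, norm_smul, Real.norm_of_nonneg ht]
    exact mul_le_of_le_one_right ht hv
  calc (κ - 1) / (L ^ (1 / (κ - 1)) * κ) * ‖fderiv ℝ f x‖ ^ (κ / (κ - 1))
      = t * ‖fderiv ℝ f x‖ - L / κ * t ^ κ :=
        (div_rpow_mul_sub_rpow_eq (norm_nonneg _) hL hκ1).symm
    _ ≤ f x - f (x + -(t • v)) := by linarith
    _ ≤ f x - f xstar := by linarith [hmin (x + -(t • v))]

/-- If `f : E → ℝ` is convex, differentiable, `(L, κ)`-weakly smooth w.r.t. `‖·‖` with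
`κ ∈ (1,2]`, and `x*` is a global minimizer of `f`, then for all `x`:
`f(x) − f(x*) ≥ ((κ−1)/(L^{1/(κ−1)} κ)) ‖∇f(x)‖_*^{κ/(κ−1)}`. -/
theorem stmt4 {E : Type*} [NormedAddCommGroup E] [NormedSpace ℝ E] [FiniteDimensional ℝ E]
    (f : E → ℝ) (L κ : ℝ) (hL : 0 < L) (hκ1 : 1 < κ) (hκ2 : κ ≤ 2)
    (hconv : ConvexOn ℝ Set.univ f) (hdiff : Differentiable ℝ f)
    (hsmooth : ∀ x y : E, ‖fderiv ℝ f x - fderiv ℝ f y‖ ≤ L * ‖x - y‖ ^ (κ - 1))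
    (xstar : E) (hmin : ∀ y : E, f xstar ≤ f y) :
    ∀ x : E,
      ((κ - 1) / (L ^ (1 / (κ - 1)) * κ)) * ‖fderiv ℝ f x‖ ^ (κ / (κ - 1)) ≤
        f x - f xstar :=
  stmt4_general f L κ hL hκ1 hdiff hsmooth xstar hmin
end

section
/- If f: E → ℝ is convex, differentiable, and (L, κ)-weakly smooth w.r.t. ‖·‖ with κ ∈ (1,2], then for all x, y ∈ E: ((κ−1)/(L^{1/(κ−1)} κ)) ‖∇f(y) − ∇f(x)‖_*^{κ/(κ−1)} ≤ f(y) − f(x) − ⟨∇f(x), y − x⟩. -/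
/-!
Convexity bounds `f` from below by its tangent at `x`, and the Hölder continuity of `∇f` bounds it
from above by the tangent at `y` plus `(L/κ)‖z - y‖^κ`. Comparing the two bounds at `z = y - t u`
and taking the supremum over unit vectors `u` gives
`t ‖∇f(y) - ∇f(x)‖_* - (L/κ) t^κ ≤ f(y) - f(x) - ⟨∇f(x), y - x⟩` for every `t ≥ 0`; the constant
of the theorem is the maximum of the left-hand side over `t`.
-/

open Set AffineMap

section
variable {E : Type*} [NormedAddCommGroup E] [NormedSpace ℝ E] {f : E → ℝ}

theorem ConvexOn.add_fderiv_le (hconv : ConvexOn ℝ univ f) {a : E}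
    (hdiff : DifferentiableAt ℝ f a) (b : E) : f a + fderiv ℝ f a (b - a) ≤ f b := by
  have hline : ConvexOn ℝ univ (f ∘ lineMap (k := ℝ) a b) := by
    simpa using hconv.comp_affineMap (lineMap a b)
  have hderiv : HasDerivAt (f ∘ lineMap (k := ℝ) a b) (fderiv ℝ f a (b - a)) 0 := by
    have := hdiff.hasFDerivAt
    rw [← lineMap_apply_zero a b (k := ℝ)] at this
    simpa using this.comp_hasDerivAt (0 : ℝ) hasDerivAt_lineMap
  have hslope := hline.le_slope_of_hasDerivWithinAt (mem_univ 0) (mem_univ 1) one_pos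
    hderiv.hasDerivWithinAt
  simp only [slope_def_field, Function.comp_apply, lineMap_apply_zero, lineMap_apply_one,
    sub_zero, div_one] at hslope
  linarith

theorem fderiv_lineMap_apply_sub_le_of_holder {L κ : ℝ} (hκ : 0 < κ)
    (hholder : ∀ x y, ‖fderiv ℝ f x - fderiv ℝ f y‖ ≤ L * ‖x - y‖ ^ (κ - 1)) (a b : E)
    {t : ℝ} (ht : 0 ≤ t) :
    fderiv ℝ f (lineMap a b t) (b - a) - fderiv ℝ f a (b - a) ≤
      L * t ^ (κ - 1) * ‖b - a‖ ^ κ := by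
  set v := b - a
  set D := fderiv ℝ f (lineMap a b t) - fderiv ℝ f a
  have hstep : lineMap a b t - a = t • v := lineMap_vsub_left a b t
  have hv : ‖v‖ ^ κ = ‖v‖ ^ (κ - 1) * ‖v‖ := by
    rw [← Real.rpow_add_one' (norm_nonneg _) (by linarith), sub_add_cancel]
  calc D v ≤ ‖D‖ * ‖v‖ := (Real.le_norm_self _).trans (D.le_opNorm v)
    _ ≤ L * ‖t • v‖ ^ (κ - 1) * ‖v‖ := by
      gcongr
      simpa only [hstep] using hholder (lineMap a b t) a
    _ = L * t ^ (κ - 1) * ‖v‖ ^ κ := by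
      rw [norm_smul, Real.norm_of_nonneg ht, Real.mul_rpow ht (norm_nonneg _), hv]
      ring

theorem le_add_fderiv_add_rpow_of_holder {L κ : ℝ} (hκ : 0 < κ) (hdiff : Differentiable ℝ f)
    (hholder : ∀ x y, ‖fderiv ℝ f x - fderiv ℝ f y‖ ≤ L * ‖x - y‖ ^ (κ - 1)) (a b : E) :
    f b ≤ f a + fderiv ℝ f a (b - a) + L / κ * ‖b - a‖ ^ κ := by
  set v := b - a
  set ℓ : ℝ →ᵃ[ℝ] E := lineMap a b
  -- defect of the upper model along the segment: zero at `t = 0`, antitone on `[0, 1]`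
  set φ : ℝ → ℝ := fun t => f (ℓ t) - t * fderiv ℝ f a v - L / κ * ‖v‖ ^ κ * t ^ κ
  have hφ_cont : ContinuousOn φ (Icc 0 1) := by
    have hpow : Continuous fun t : ℝ => t ^ κ := Real.continuous_rpow_const hκ.le
    have hfℓ : Continuous fun t => f (ℓ t) := hdiff.continuous.comp lineMap_continuous
    exact ((hfℓ.sub (continuous_id.mul continuous_const)).sub
      (continuous_const.mul hpow)).continuousOn
  have hφ_deriv : ∀ t ∈ interior (Icc (0 : ℝ) 1), HasDerivWithinAt φ
      (fderiv ℝ f (ℓ t) v - fderiv ℝ f a v - L / κ * ‖v‖ ^ κ * (κ * t ^ (κ - 1)))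
      (interior (Icc 0 1)) t := by
    intro t ht
    rw [interior_Icc] at ht
    have hℓ : HasDerivAt ℓ v t := hasDerivAt_lineMap
    refine HasDerivAt.hasDerivWithinAt ?_
    refine (((hdiff _).hasFDerivAt.comp_hasDerivAt t hℓ).sub ?_).sub ?_
    · simpa using (hasDerivAt_id t).mul_const (fderiv ℝ f a v)
    · exact (Real.hasDerivAt_rpow_const (Or.inl ht.1.ne')).const_mul _
  have hanti : AntitoneOn φ (Icc 0 1) := by
    refine antitoneOn_of_hasDerivWithinAt_nonpos (convex_Icc 0 1) hφ_cont hφ_deriv fun t ht => ?_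
    rw [interior_Icc] at ht
    have := fderiv_lineMap_apply_sub_le_of_holder hκ hholder a b ht.1.le
    field_simp
    linarith
  have := hanti (left_mem_Icc.2 zero_le_one) (right_mem_Icc.2 zero_le_one) zero_le_one
  simp only [φ, ℓ, lineMap_apply_one, lineMap_apply_zero, one_mul, Real.one_rpow, mul_one,
    zero_mul, sub_zero, Real.zero_rpow hκ.ne', mul_zero] at this
  linarith

theorem ConvexOn.mul_fderiv_sub_fderiv_apply_sub_rpow_le {L κ : ℝ} (hconv : ConvexOn ℝ univ f)
    (hdiff : Differentiable ℝ f) (hL : 0 ≤ L) (hκ : 0 < κ)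
    (hholder : ∀ x y, ‖fderiv ℝ f x - fderiv ℝ f y‖ ≤ L * ‖x - y‖ ^ (κ - 1))
    (x y : E) {t : ℝ} (ht : 0 ≤ t) {u : E} (hu : ‖u‖ ≤ 1) :
    t * (fderiv ℝ f y - fderiv ℝ f x) u - L / κ * t ^ κ ≤ f y - f x - fderiv ℝ f x (y - x) := by
  set z := y - t • u
  have hlower := hconv.add_fderiv_le (hdiff x) z
  have hupper := le_add_fderiv_add_rpow_of_holder hκ hdiff hholder y z
  have hzy : z - y = -(t • u) := sub_sub_cancel_left y (t • u)
  have hzx : z - x = (y - x) - t • u := sub_right_comm y (t • u) x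
  have hnorm : L / κ * ‖-(t • u)‖ ^ κ ≤ L / κ * t ^ κ := by
    gcongr
    rw [norm_neg, norm_smul, Real.norm_of_nonneg ht]
    exact mul_le_of_le_one_right ht hu
  rw [hzx, map_sub, map_smul, smul_eq_mul] at hlower
  rw [hzy, map_neg, map_smul, smul_eq_mul] at hupper
  rw [sub_apply]
  linarith

theorem ConvexOn.mul_norm_fderiv_sub_fderiv_sub_rpow_le {L κ : ℝ} (hconv : ConvexOn ℝ univ f)
    (hdiff : Differentiable ℝ f) (hL : 0 ≤ L) (hκ : 0 < κ)
    (hholder : ∀ x y, ‖fderiv ℝ f x - fderiv ℝ f y‖ ≤ L * ‖x - y‖ ^ (κ - 1))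
    (x y : E) {t : ℝ} (ht : 0 ≤ t) :
    t * ‖fderiv ℝ f y - fderiv ℝ f x‖ - L / κ * t ^ κ ≤ f y - f x - fderiv ℝ f x (y - x) := by
  have hdir := fun (u : E) (hu : ‖u‖ ≤ 1) =>
    hconv.mul_fderiv_sub_fderiv_apply_sub_rpow_le hdiff hL hκ hholder x y ht hu
  have hzero := hdir 0 (by simp)
  rw [map_zero, mul_zero, zero_sub] at hzero
  rcases ht.eq_or_lt with rfl | htpos
  · simpa using hzero
  have hnorm : ‖fderiv ℝ f y - fderiv ℝ f x‖ ≤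
      (f y - f x - fderiv ℝ f x (y - x) + L / κ * t ^ κ) / t := by
    refine ContinuousLinearMap.opNorm_le_of_unit_norm (div_nonneg (by linarith) htpos.le)
      fun u hu => ?_
    have hpos := hdir u hu.le
    have hneg := hdir (-u) (by rw [norm_neg, hu])
    rw [map_neg] at hneg
    rw [le_div_iff₀ htpos, Real.norm_eq_abs]
    rcases abs_cases ((fderiv ℝ f y - fderiv ℝ f x) u) with ⟨habs, -⟩ | ⟨habs, -⟩ <;>
      rw [habs] <;> linarith
  rw [le_div_iff₀ htpos] at hnorm
  linarith

end

theorem mul_sub_rpow_eq_at_critical_point {G L κ : ℝ} (hG : 0 ≤ G) (hL : 0 < L) (hκ : 1 < κ) :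
    (G / L) ^ (1 / (κ - 1)) * G - L / κ * ((G / L) ^ (1 / (κ - 1))) ^ κ =
      (κ - 1) / (L ^ (1 / (κ - 1)) * κ) * G ^ (κ / (κ - 1)) := by
  have hκ1 : κ - 1 ≠ 0 := by linarith
  have hq : κ / (κ - 1) = 1 / (κ - 1) + 1 := by field_simp; ring
  have hpq : 1 / (κ - 1) * κ = κ / (κ - 1) := by rw [div_mul_eq_mul_div, one_mul]
  have hq0 : 1 / (κ - 1) + 1 ≠ 0 := by rw [← hq]; exact div_ne_zero (by linarith) hκ1
  rw [← Real.rpow_mul (div_nonneg hG hL.le), hpq, Real.div_rpow hG hL.le,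
    Real.div_rpow hG hL.le, hq, Real.rpow_add hL, Real.rpow_one, Real.rpow_add' hG hq0,
    Real.rpow_one]
  have hLp : 0 < L ^ (1 / (κ - 1)) := Real.rpow_pos_of_pos hL _
  field_simp

theorem stmt5_general {E : Type*} [NormedAddCommGroup E] [NormedSpace ℝ E]
    (f : E → ℝ) (L κ : ℝ) (hL : 0 < L) (hκ1 : 1 < κ)
    (hconv : ConvexOn ℝ Set.univ f) (hdiff : Differentiable ℝ f)
    (hsmooth : ∀ x y : E, ‖fderiv ℝ f x - fderiv ℝ f y‖ ≤ L * ‖x - y‖ ^ (κ - 1)) :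
    ∀ x y : E,
      ((κ - 1) / (L ^ (1 / (κ - 1)) * κ)) * ‖fderiv ℝ f y - fderiv ℝ f x‖ ^ (κ / (κ - 1)) ≤
        f y - f x - fderiv ℝ f x (y - x) := by
  intro x y
  rw [← mul_sub_rpow_eq_at_critical_point (norm_nonneg _) hL hκ1]
  exact hconv.mul_norm_fderiv_sub_fderiv_sub_rpow_le hdiff hL.le (zero_lt_one.trans hκ1) hsmooth
    x y (Real.rpow_nonneg (div_nonneg (norm_nonneg _) hL.le) _)

/-- If `f : E → ℝ` is convex, differentiable, `(L, κ)`-weakly smooth w.r.t. `‖·‖` with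
`κ ∈ (1,2]`, then for all `x, y`:
`((κ−1)/(L^{1/(κ−1)} κ)) ‖∇f(y) − ∇f(x)‖_*^{κ/(κ−1)} ≤ f(y) − f(x) − ⟨∇f(x), y − x⟩`. -/
theorem stmt5 {E : Type*} [NormedAddCommGroup E] [NormedSpace ℝ E] [FiniteDimensional ℝ E]
    (f : E → ℝ) (L κ : ℝ) (hL : 0 < L) (hκ1 : 1 < κ) (hκ2 : κ ≤ 2)
    (hconv : ConvexOn ℝ Set.univ f) (hdiff : Differentiable ℝ f)
    (hsmooth : ∀ x y : E, ‖fderiv ℝ f x - fderiv ℝ f y‖ ≤ L * ‖x - y‖ ^ (κ - 1)) :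
    ∀ x y : E,
      ((κ - 1) / (L ^ (1 / (κ - 1)) * κ)) * ‖fderiv ℝ f y - fderiv ℝ f x‖ ^ (κ / (κ - 1)) ≤
        f y - f x - fderiv ℝ f x (y - x) :=
  stmt5_general f L κ hL hκ1 hconv hdiff hsmooth
end

section
/- Let f be (L, κ)-weakly smooth w.r.t. ‖·‖ with κ ∈ (1,2], let p ≥ κ and δ > 0, and set M = [2(p−κ)/(pκδ)]^{(p−κ)/κ} · L^{p/κ}. Then for all x, y ∈ E: f(y) ≤ f(x) + ⟨∇f(x), y − x⟩ + (M/p)‖y − x‖^p + δ/2. -/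
/-!
Along the segment from `x` to `y`, comparing derivatives turns the Hölder bound on `∇f` into the
descent inequality `f y ≤ f x + ⟨∇f x, y - x⟩ + (L/κ)‖y - x‖^κ`. The power `κ` is then traded
for the power `p ≥ κ` plus the additive slack `δ/2` by Young's inequality with the conjugate
exponents `p/κ` and `p/(p - κ)`; the constant `M` is exactly what the scaling that makes the
slack `δ/2` produces.
-/

open Set

section Descent

variable {E : Type*} [NormedAddCommGroup E] [NormedSpace ℝ E] {f : E → ℝ} {L κ : ℝ} {x : E}

lemma fderiv_sub_fderiv_apply_le_of_holder
    (hx : ∀ z, ‖fderiv ℝ f z - fderiv ℝ f x‖ ≤ L * ‖z - x‖ ^ (κ - 1)) (hκ : 0 < κ) (v : E)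
    {t : ℝ} (ht : 0 < t) :
    fderiv ℝ f (x + t • v) v - fderiv ℝ f x v ≤ L * ‖v‖ ^ κ * t ^ (κ - 1) := by
  have hv : ‖v‖ ^ (κ - 1) * ‖v‖ = ‖v‖ ^ κ := by
    rw [← Real.rpow_add_one' (norm_nonneg v) (by linarith), sub_add_cancel]
  calc fderiv ℝ f (x + t • v) v - fderiv ℝ f x v
      = (fderiv ℝ f (x + t • v) - fderiv ℝ f x) v := rfl
    _ ≤ ‖fderiv ℝ f (x + t • v) - fderiv ℝ f x‖ * ‖v‖ :=
        (Real.le_norm_self _).trans (ContinuousLinearMap.le_opNorm _ _)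
    _ ≤ L * ‖t • v‖ ^ (κ - 1) * ‖v‖ := by
        gcongr
        simpa using hx (x + t • v)
    _ = L * ‖v‖ ^ κ * t ^ (κ - 1) := by
        rw [norm_smul, Real.norm_of_nonneg ht.le, Real.mul_rpow ht.le (norm_nonneg v), ← hv]
        ring

theorem image_le_add_fderiv_add_rpow_of_holder (hf : Differentiable ℝ f)
    (hx : ∀ z, ‖fderiv ℝ f z - fderiv ℝ f x‖ ≤ L * ‖z - x‖ ^ (κ - 1)) (hκ : 0 < κ) (y : E) :
    f y ≤ f x + fderiv ℝ f x (y - x) + L / κ * ‖y - x‖ ^ κ := by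
  set v := y - x
  set g : ℝ → ℝ := fun t ↦ f (x + t • v) - t * fderiv ℝ f x v - L / κ * ‖v‖ ^ κ * t ^ κ
  have hg : AntitoneOn g (Icc 0 1) := by
    have hline (t : ℝ) : HasDerivAt (fun t : ℝ ↦ x + t • v) v t := by
      simpa using ((hasDerivAt_id t).smul_const v).const_add x
    refine antitoneOn_of_hasDerivWithinAt_nonpos (convex_Icc 0 1)
      (f' := fun t ↦ fderiv ℝ f (x + t • v) v - fderiv ℝ f x v - L * ‖v‖ ^ κ * t ^ (κ - 1))
      ?_ (fun t ht ↦ ?_) (fun t ht ↦ ?_)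
    · exact (((hf.continuous.comp (continuous_const.add (continuous_id.smul continuous_const))).sub
        (continuous_id.mul continuous_const)).sub
        (continuous_const.mul (Real.continuous_rpow_const hκ.le))).continuousOn
    · rw [interior_Icc] at ht
      have := (((hf _).hasFDerivAt.comp_hasDerivAt t (hline t)).sub
        ((hasDerivAt_id t).mul_const (fderiv ℝ f x v))).sub
        ((Real.hasDerivAt_rpow_const (p := κ) (Or.inl ht.1.ne')).const_mul (L / κ * ‖v‖ ^ κ))
      refine (this.congr_deriv ?_).hasDerivWithinAt
      field_simp
    · rw [interior_Icc] at ht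
      exact sub_nonpos.2 (fderiv_sub_fderiv_apply_le_of_holder hx hκ v ht.1)
  have := hg (left_mem_Icc.2 zero_le_one) (right_mem_Icc.2 zero_le_one) zero_le_one
  simp only [g, v, zero_smul, add_zero, zero_mul, sub_zero, one_smul, one_mul, add_sub_cancel,
    Real.zero_rpow hκ.ne', mul_zero, Real.one_rpow, mul_one] at this
  linarith

end Descent

-- Young's inequality for the factorization `u = (t ^ (1 / r') * u) * t ^ (-1 / r')`.
lemma Real.le_rpow_mul_div_add_inv_div {r r' u t : ℝ} (hr : r.HolderConjugate r') (hu : 0 ≤ u)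
    (ht : 0 < t) : u ≤ t ^ (r / r') * u ^ r / r + t⁻¹ / r' := by
  have hτ : 0 < t ^ r'⁻¹ := Real.rpow_pos_of_pos ht _
  have := Real.young_inequality_of_nonneg (mul_nonneg hτ.le hu) (inv_nonneg.2 hτ.le) hr
  rwa [mul_right_comm, mul_inv_cancel₀ hτ.ne', one_mul, Real.mul_rpow hτ.le hu,
    ← Real.rpow_mul ht.le, Real.inv_rpow hτ.le, Real.rpow_inv_rpow ht.le hr.symm.ne_zero,
    inv_mul_eq_div] at this

lemma div_mul_rpow_le_div_mul_rpow_add {L κ p δ s : ℝ} (hL : 0 < L) (hκ : 0 < κ) (hp : κ ≤ p)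
    (hδ : 0 < δ) (hs : 0 ≤ s) :
    L / κ * s ^ κ ≤
      (2 * (p - κ) / (p * κ * δ)) ^ ((p - κ) / κ) * L ^ (p / κ) / p * s ^ p + δ / 2 := by
  obtain rfl | hpκ := hp.eq_or_lt
  · simp only [sub_self, mul_zero, zero_div, Real.rpow_zero, div_self hκ.ne', Real.rpow_one,
      one_mul, le_add_iff_nonneg_right]
    positivity
  set c := 2 * (p - κ) / (p * κ * δ)
  have hp0 : 0 < p := hκ.trans hpκ
  have hpκ0 : 0 < p - κ := sub_pos.2 hpκ
  have hc : 0 < c := by positivity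
  have hconj : (p / κ).HolderConjugate (p / (p - κ)) := by
    simpa only [inv_div] using Real.HolderConjugate.inv_inv (a := κ / p) (b := (p - κ) / p)
      (by positivity) (by positivity) (by field_simp; ring)
  have hyoung := Real.le_rpow_mul_div_add_inv_div hconj (Real.rpow_nonneg hs κ) (mul_pos hc hL)
  have hexp : p / κ / (p / (p - κ)) = (p - κ) / κ := by field_simp
  have hsp : (s ^ κ) ^ (p / κ) = s ^ p := by rw [← Real.rpow_mul hs, mul_div_cancel₀ _ hκ.ne']
  have hLp : L ^ (p / κ) = L * L ^ ((p - κ) / κ) := by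
    rw [← Real.rpow_one_add' hL.le (by positivity)]
    congr 1
    field_simp
    ring
  rw [hexp, hsp, Real.mul_rpow hc.le hL.le] at hyoung
  calc L / κ * s ^ κ
      ≤ L / κ * (c ^ ((p - κ) / κ) * L ^ ((p - κ) / κ) * s ^ p / (p / κ)
          + (c * L)⁻¹ / (p / (p - κ))) :=
        mul_le_mul_of_nonneg_left hyoung (by positivity)
    _ = c ^ ((p - κ) / κ) * L ^ (p / κ) / p * s ^ p + δ / 2 := by
        rw [hLp]
        simp only [c]
        field_simp

theorem stmt6_general {E : Type*} [NormedAddCommGroup E] [NormedSpace ℝ E]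
    (f : E → ℝ) (L κ p δ : ℝ) (hL : 0 < L) (hκ1 : 1 < κ)
    (hp : κ ≤ p) (hδ : 0 < δ)
    (hdiff : Differentiable ℝ f)
    (hsmooth : ∀ x y : E, ‖fderiv ℝ f x - fderiv ℝ f y‖ ≤ L * ‖x - y‖ ^ (κ - 1))
    (M : ℝ) (hM : M = (2 * (p - κ) / (p * κ * δ)) ^ ((p - κ) / κ) * L ^ (p / κ)) :
    ∀ x y : E,
      f y ≤ f x + fderiv ℝ f x (y - x) + (M / p) * ‖y - x‖ ^ p + δ / 2 := by
  intro x y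
  have hκ : 0 < κ := zero_lt_one.trans hκ1
  have hdescent := image_le_add_fderiv_add_rpow_of_holder hdiff (fun z ↦ hsmooth z x) hκ y
  have hyoung := div_mul_rpow_le_div_mul_rpow_add hL hκ hp hδ (norm_nonneg (y - x))
  rw [← hM] at hyoung
  linarith

/-- Let `f` be `(L, κ)`-weakly smooth w.r.t. `‖·‖` with `κ ∈ (1,2]`, `p ≥ κ`, `δ > 0`,
and `M = [2(p−κ)/(pκδ)]^{(p−κ)/κ} · L^{p/κ}`.  Then for all `x, y`:
`f(y) ≤ f(x) + ⟨∇f(x), y − x⟩ + (M/p)‖y − x‖^p + δ/2`. -/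
theorem stmt6 {E : Type*} [NormedAddCommGroup E] [NormedSpace ℝ E] [FiniteDimensional ℝ E]
    (f : E → ℝ) (L κ p δ : ℝ) (hL : 0 < L) (hκ1 : 1 < κ) (hκ2 : κ ≤ 2)
    (hp : κ ≤ p) (hδ : 0 < δ)
    (hdiff : Differentiable ℝ f)
    (hsmooth : ∀ x y : E, ‖fderiv ℝ f x - fderiv ℝ f y‖ ≤ L * ‖x - y‖ ^ (κ - 1))
    (M : ℝ) (hM : M = (2 * (p - κ) / (p * κ * δ)) ^ ((p - κ) / κ) * L ^ (p / κ)) :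
    ∀ x y : E,
      f y ≤ f x + fderiv ℝ f x (y - x) + (M / p) * ‖y - x‖ ^ p + δ / 2 :=
  stmt6_general f L κ p δ hL hκ1 hp hδ hdiff hsmooth M hM
end
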